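/- arXiv:2010.15541 — 2 statements merged into one kernel-verified Lean document; each statement's English description precedes it below -/
import Mathlib

section
/- Let κ ∈ ℝ, let e₁, e₂, e₃ be the standard orthonormal basis of ℝ³, let m, φ ∈ ℝ³, and let v₁, v₂, v₃, w₁, w₂, w₃ ∈ ℝ³ with vᵢ·m = 0 for i = 1, 2, 3. Then Σ_{i=1}^{3} (vᵢ − κ(eᵢ × m)) · (wᵢ × m + φ × vᵢ − κ eᵢ × (φ × m)) = Σ_{i=1}^{3} (m × (vᵢ − κ(eᵢ × m))) · wᵢ + κ Σ_{i=1}^{3} ((vᵢ·eᵢ)(m·φ) − (m·eᵢ)(vᵢ·φ)). -/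
noncomputable section
open scoped RealInnerProductSpace

/-- Euclidean 3-space. -/
abbrev R3 := EuclideanSpace ℝ (Fin 3)

/-- The cross product on `R3`. -/
def cross (u v : R3) : R3 :=
  (WithLp.equiv 2 (Fin 3 → ℝ)).symm
    ![u 1 * v 2 - u 2 * v 1, u 2 * v 0 - u 0 * v 2, u 0 * v 1 - u 1 * v 0]

/-- The standard orthonormal basis vectors of `R3`. -/
def e (i : Fin 3) : R3 := EuclideanSpace.single i 1

/-!
The `w`-terms are matched by the cyclic symmetry of the triple product, and every other term
of the left-hand side is a product `⟪a × b, c × d⟫`, which the Binet–Cauchy identity turns into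
inner products. What survives of the `κ²`-terms is `∑ᵢ ⟪m, eᵢ⟫ ⟪eᵢ, φ × m⟫ = ⟪m, φ × m⟫ = 0`.
-/

open Matrix WithLp

lemma ofLp_cross (u v : R3) : ofLp (cross u v) = ofLp u ⨯₃ ofLp v := by
  rw [cross_apply]
  rfl

lemma real_inner_eq_dotProduct (x y : R3) : ⟪x, y⟫ = ofLp x ⬝ᵥ ofLp y := by
  rw [EuclideanSpace.inner_eq_star_dotProduct, star_trivial, dotProduct_comm]

lemma inner_cross_right (u v w : R3) : ⟪u, cross v w⟫ = ⟪cross u v, w⟫ := by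
  simp only [real_inner_eq_dotProduct, ofLp_cross]
  rw [dotProduct_comm _ (ofLp w)]
  exact (triple_product_permutation _ _ _).symm

lemma inner_cross_self (u v : R3) : ⟪u, cross v u⟫ = 0 := by
  rw [real_inner_eq_dotProduct, ofLp_cross, dot_cross_self]

lemma inner_cross_cross (a b c d : R3) :
    ⟪cross a b, cross c d⟫ = ⟪a, c⟫ * ⟪b, d⟫ - ⟪a, d⟫ * ⟪b, c⟫ := by
  simp only [real_inner_eq_dotProduct, ofLp_cross, cross_dot_cross]

lemma sum_inner_e_mul_inner_e (x y : R3) : ∑ i, ⟪x, e i⟫ * ⟪e i, y⟫ = ⟪x, y⟫ := by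
  simpa [e, EuclideanSpace.basisFun_apply] using
    (EuclideanSpace.basisFun (Fin 3) ℝ).sum_inner_mul_inner x y

lemma inner_sub_smul_cross_eq (κ : ℝ) (c m φ v w : R3) :
    ⟪v - κ • cross c m, cross w m + cross φ v - κ • cross c (cross φ m)⟫
      = ⟪cross m (v - κ • cross c m), w⟫ + κ * (⟪v, c⟫ * ⟪m, φ⟫ - ⟪m, c⟫ * ⟪v, φ⟫)
        - κ ^ 2 * (⟪m, c⟫ * ⟪c, cross φ m⟫) := by
  have hw : ⟪v - κ • cross c m, cross w m⟫ = ⟪cross m (v - κ • cross c m), w⟫ := by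
    rw [inner_cross_right, real_inner_comm, inner_cross_right]
  have hv : ⟪v, cross c (cross φ m)⟫ = ⟪cross v c, cross φ m⟫ := inner_cross_right _ _ _
  rw [inner_sub_right, inner_add_right, inner_smul_right, hw]
  simp only [inner_sub_left, inner_smul_left, hv, inner_cross_self, inner_cross_cross,
    RCLike.conj_to_real]
  simp only [real_inner_comm]
  ring

theorem stmt_10_general (κ : ℝ) (m φ : R3) (v w : Fin 3 → R3) :
    ∑ i : Fin 3, ⟪v i - κ • cross (e i) m,
        cross (w i) m + cross φ (v i) - κ • cross (e i) (cross φ m)⟫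
    = ∑ i : Fin 3, ⟪cross m (v i - κ • cross (e i) m), w i⟫
      + κ * ∑ i : Fin 3, (⟪v i, e i⟫ * ⟪m, φ⟫ - ⟪m, e i⟫ * ⟪v i, φ⟫) := by
  simp only [inner_sub_smul_cross_eq, Finset.sum_sub_distrib, Finset.sum_add_distrib,
    ← Finset.mul_sum, sum_inner_e_mul_inner_e, inner_cross_self]
  ring

/-- Pointwise form of the key algebraic identity (3.15): the Frobenius product of helical
derivative matrices 𝔇u : 𝔇(φ × u). -/
theorem stmt_10 (κ : ℝ) (m φ : R3) (v w : Fin 3 → R3)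
    (hv : ∀ i, ⟪v i, m⟫ = 0) :
    ∑ i : Fin 3, ⟪v i - κ • cross (e i) m,
        cross (w i) m + cross φ (v i) - κ • cross (e i) (cross φ m)⟫
    = ∑ i : Fin 3, ⟪cross m (v i - κ • cross (e i) m), w i⟫
      + κ * ∑ i : Fin 3, (⟪v i, e i⟫ * ⟪m, φ⟫ - ⟪m, e i⟫ * ⟪v i, φ⟫) :=
  stmt_10_general κ m φ v w
end
end

section
/- Let V be a real vector space, let a, p, n : V × V → ℝ be symmetric bilinear forms, let c : V × V → ℝ be a bilinear form, let ℓ : V → ℝ be a linear map, and let α, τ ∈ ℝ. Define E : V → ℝ by E(u) := (1/2)a(u,u) + c(u,u) − (1/2)p(u,u) − ℓ(u). Suppose m, v ∈ V satisfy α n(v,v) + τ a(v,v) + τ c(v,v) = −a(m,v) + p(m,v) + ℓ(v) − c(m,v) − c(v,m). Then E(m + τ v) = E(m) − α τ n(v,v) − (τ²/2) a(v,v) − (τ²/2) p(v,v). -/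
/-! Expanding `E (m + τ • v)` in `τ` gives `E m`, plus `τ` times the first variation of `E` at `m`
in direction `v`, plus `τ²` times the quadratic part at `v`. The variational equation tested with
`v` expresses that first variation; its Crank–Nicolson term `c m v + c v m` is exactly the cross
term of the non-symmetric form `c`, so the `c`-contributions cancel without a remainder. -/

theorem LinearMap.apply_add_smul_add_smul {R M : Type*} [CommRing R] [AddCommGroup M] [Module R M]
    (B : M →ₗ[R] M →ₗ[R] R) (m v : M) (t : R) :
    B (m + t • v) (m + t • v) = B m m + t * (B m v + B v m) + t ^ 2 * B v v := by
  simp only [map_add, map_smul, LinearMap.add_apply, LinearMap.smul_apply, smul_eq_mul]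
  ring

theorem stmt_13_general {V : Type*} [AddCommGroup V] [Module ℝ V]
    (a p n : V →ₗ[ℝ] V →ₗ[ℝ] ℝ) (c : V →ₗ[ℝ] V →ₗ[ℝ] ℝ) (ℓ : V →ₗ[ℝ] ℝ)
    (ha : ∀ x y, a x y = a y x) (hp : ∀ x y, p x y = p y x)
    (α τ : ℝ) (E : V → ℝ)
    (hE : ∀ u, E u = (1/2) * a u u + c u u - (1/2) * p u u - ℓ u)
    (m v : V)
    (hv : α * n v v + τ * a v v + τ * c v v
          = -(a m v) + p m v + ℓ v - c m v - c v m) :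
    E (m + τ • v) = E m - α * τ * n v v - (τ^2/2) * a v v - (τ^2/2) * p v v := by
  rw [hE, hE, LinearMap.apply_add_smul_add_smul a, LinearMap.apply_add_smul_add_smul c,
    LinearMap.apply_add_smul_add_smul p, map_add, map_smul, smul_eq_mul, ha v m, hp v m]
  linear_combination τ * hv

/-- Abstract discrete energy law (4.6) of Proposition 4.2 for the projection-free tangent
plane scheme. -/
theorem stmt_13 {V : Type*} [AddCommGroup V] [Module ℝ V]
    (a p n : V →ₗ[ℝ] V →ₗ[ℝ] ℝ) (c : V →ₗ[ℝ] V →ₗ[ℝ] ℝ) (ℓ : V →ₗ[ℝ] ℝ)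
    (ha : ∀ x y, a x y = a y x) (hp : ∀ x y, p x y = p y x)
    (hn : ∀ x y, n x y = n y x)
    (α τ : ℝ) (E : V → ℝ)
    (hE : ∀ u, E u = (1/2) * a u u + c u u - (1/2) * p u u - ℓ u)
    (m v : V)
    (hv : α * n v v + τ * a v v + τ * c v v
          = -(a m v) + p m v + ℓ v - c m v - c v m) :
    E (m + τ • v) = E m - α * τ * n v v - (τ^2/2) * a v v - (τ^2/2) * p v v :=
  stmt_13_general a p n c ℓ ha hp α τ E hE m v hv
end
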